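/- Let (X, w) be a weighted pure d-dimensional simplicial complex and let i, k ≥ 0 satisfy i + k + 2 ≤ d. Then for all f, g ∈ C^k(X; ℝ): ⟨M_k^+ f, g⟩ = Σ_{σ ∈ X(i)} w(σ) ⟨M_k^+(f|_σ), g|_σ⟩_{X_σ}, where f|_σ ∈ C^k(X_σ; ℝ) is the restriction of f to X_σ(k) ⊆ X(k), M_k^+ on the right-hand side is the non-lazy up-down walk operator of the link X_σ (with the link weights w_σ), and ⟨·,·⟩_{X_σ} is the inner product with respect to w_σ. In other words, restriction respects the non-lazy up-down random walk. -/

import Mathlib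

/-!
Weighted pure simplicial complexes, links, cochains, signless differentials
and high dimensional random walk operators.

Conventions: faces are `Finset`s of vertices. A cochain "of dimension `k`"
(an element of `C^k(X;ℝ)`) is represented by a function `Finset V → ℝ`
evaluated on faces of **cardinality** `c = k + 1`; all operators are indexed
by cardinality.
-/

open Finset

namespace HDRW

noncomputable section

variable {V : Type*} [DecidableEq V] [Fintype V]

/-- A weighted family of faces (the data of a weighted complex or of a link). -/
structure WFam (V : Type*) [DecidableEq V] [Fintype V] where
  faces : Finset (Finset V)
  w : Finset V → ℝ

namespace WFam

/-- The faces of cardinality `c` (i.e. of dimension `c - 1`). -/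
def dimFaces (Y : WFam V) (c : ℕ) : Finset (Finset V) :=
  Y.faces.filter fun σ => σ.card = c

/-- The link of a face `τ`, as a weighted family; the weights are
`w_τ(s) = w (s ∪ τ) / (C(|s| + |τ|, |τ|) * w τ)`. -/
def link (Y : WFam V) (τ : Finset V) : WFam V where
  faces := Finset.univ.powerset.filter fun s => Disjoint s τ ∧ s ∪ τ ∈ Y.faces
  w := fun s => Y.w (s ∪ τ) / (((s.card + τ.card).choose τ.card : ℝ) * Y.w τ)

/-- The inner product of two `c`-cochains: `⟨f, g⟩ = Σ_{σ} w σ * f σ * g σ`. -/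
def inner (Y : WFam V) (c : ℕ) (f g : Finset V → ℝ) : ℝ :=
  ∑ σ ∈ Y.dimFaces c, Y.w σ * (f σ * g σ)

/-- The squared norm `‖f‖² = ⟨f, f⟩` of a `c`-cochain. -/
def norm2 (Y : WFam V) (c : ℕ) (f : Finset V → ℝ) : ℝ := Y.inner c f f

end WFam

/-- The signless differential `d` from cochains on faces of cardinality `c`
(dimension `c-1`) to cochains on faces of cardinality `c+1`:
`(d f)(σ) = (1/(c+1)) Σ_{τ ⊆ σ, |τ| = c} f τ`. -/
def sDiff (c : ℕ) (f : Finset V → ℝ) : Finset V → ℝ :=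
  fun σ => ((c : ℝ) + 1)⁻¹ * ∑ τ ∈ σ.powerset.filter (fun τ => τ.card = c), f τ

/-- Iterated signless differential `C_a → C_{a+n}` (in cardinality indexing),
i.e. `d_{a+n-2} ⋯ d_{a-1}` in dimension indexing. -/
def sDiffIter (a : ℕ) : ℕ → (Finset V → ℝ) → (Finset V → ℝ)
  | 0, f => f
  | n + 1, f => sDiff (a + n) (sDiffIter a n f)

namespace WFam

/-- The adjoint `d^*` of the signless differential, from cochains on faces of
cardinality `c+1` to cochains on faces of cardinality `c`; it is given by the
explicit formula `(d^* f)(τ) = Σ_{σ ∈ X(c), τ ⊆ σ} w_τ(σ ∖ τ) * f σ` (a sum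
over the cardinality-`(c+1)` faces containing `τ`). -/
def sAdj (Y : WFam V) (c : ℕ) (f : Finset V → ℝ) : Finset V → ℝ :=
  fun τ => ∑ σ ∈ (Y.dimFaces (c + 1)).filter (fun σ => τ ⊆ σ),
    (Y.link τ).w (σ \ τ) * f σ

/-- Iterated adjoint of the signless differential, `C_{a+n} → C_a`
(in cardinality indexing), i.e. `d_{a-1}^* ⋯ d_{a+n-2}^*`. -/
def sAdjIter (Y : WFam V) : ℕ → ℕ → (Finset V → ℝ) → (Finset V → ℝ)
  | _, 0, f => f
  | a, n + 1, f => Y.sAdj a (sAdjIter Y (a + 1) n f)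

/-- The non-lazy up-down random walk operator `M⁺` on cochains of cardinality
`c` (dimension `k = c-1`): `(M⁺ f)(σ) = (1/(k+1)) Σ_{τ, σ ∪ τ ∈ X(k+1)} w_σ(τ∖σ) f τ`. -/
def nonLazy (Y : WFam V) (c : ℕ) (f : Finset V → ℝ) : Finset V → ℝ :=
  fun σ => (c : ℝ)⁻¹ *
    ∑ τ ∈ (Y.dimFaces c).filter (fun τ => σ ∪ τ ∈ Y.dimFaces (c + 1)),
      (Y.link σ).w (τ \ σ) * f τ

/-- The (lazy) up-down random walk operator `U` on cochains of cardinality `c`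
(dimension `k = c-1`):
`(U f)(σ) = (1/(k+2)) f σ + (1/(k+2)) Σ_{τ, σ ∪ τ ∈ X(k+1)} w_σ(τ∖σ) f τ`. -/
def upDown (Y : WFam V) (c : ℕ) (f : Finset V → ℝ) : Finset V → ℝ :=
  fun σ => ((c : ℝ) + 1)⁻¹ * f σ + ((c : ℝ) + 1)⁻¹ *
    ∑ τ ∈ (Y.dimFaces c).filter (fun τ => σ ∪ τ ∈ Y.dimFaces (c + 1)),
      (Y.link σ).w (τ \ σ) * f τ

/-- The down-up random walk operator `D` on cochains of cardinality `c`
(dimension `k = c-1`). -/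
def downUp (Y : WFam V) (c : ℕ) (f : Finset V → ℝ) : Finset V → ℝ :=
  fun σ => (c : ℝ)⁻¹ *
      (∑ τ' ∈ σ.powerset.filter (fun τ' => τ'.card = c - 1), (Y.link τ').w (σ \ τ')) * f σ
    + (c : ℝ)⁻¹ *
      ∑ τ ∈ (Y.dimFaces c).filter (fun τ => τ ≠ σ ∧ σ ∩ τ ∈ Y.dimFaces (c - 1)),
        (Y.link (σ ∩ τ)).w (τ \ σ) * f τ

/-- The `i`-down-up operator `D^i = d ⋯ d d^* ⋯ d^*` (going down `i+1` steps and
back up) on cochains of cardinality `c` (dimension `k = c-1`); in dimension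
indexing this is `D_k^i = d_{k-1} ⋯ d_{k-i-1} d_{k-i-1}^* ⋯ d_{k-1}^*`. -/
def downUpIter (Y : WFam V) (c i : ℕ) (f : Finset V → ℝ) : Finset V → ℝ :=
  sDiffIter (c - (i + 1)) (i + 1) (Y.sAdjIter (c - (i + 1)) (i + 1) f)

/-- `Y` (through its 1-skeleton) is a `γ`-(one sided) spectral expander:
every function on the vertices orthogonal to the constants has Rayleigh
quotient of the non-lazy random walk at most `γ` (Rayleigh characterization of
"the second largest eigenvalue of `M₀⁺` is at most `γ`"). -/
def isExpander (Y : WFam V) (γ : ℝ) : Prop :=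
  ∀ f : Finset V → ℝ, Y.inner 1 f (fun _ => 1) = 0 →
    Y.inner 1 (Y.nonLazy 1 f) f ≤ γ * Y.norm2 1 f

/-- `Y` (through its 1-skeleton) is connected: the eigenvalue `1` of the
non-lazy random walk `M₀⁺` has multiplicity one, i.e. every nonzero function on
the vertices orthogonal to the constants has Rayleigh quotient strictly
less than `1`. -/
def isConnected (Y : WFam V) : Prop :=
  ∀ f : Finset V → ℝ, Y.inner 1 f (fun _ => 1) = 0 → Y.norm2 1 f ≠ 0 →
    Y.inner 1 (Y.nonLazy 1 f) f < Y.norm2 1 f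

/-- `f` is an `i`-level cochain of cardinality `c` (dimension `k = c-1`) with
respect to localization: for every face `σ` of cardinality `i` (i.e. of
dimension `i-1`), the localization `f_σ` is orthogonal to the constants in the
link `X_σ`. -/
def isLevel (Y : WFam V) (i c : ℕ) (f : Finset V → ℝ) : Prop :=
  ∀ σ ∈ Y.dimFaces i,
    (Y.link σ).inner (c - i) (fun s => f (σ ∪ s)) (fun _ => 1) = 0

/-- `f` is a proper `i`-level cochain of cardinality `c`: it is an `i`-level
cochain which is in addition orthogonal to every `(i+1)`-level cochain. -/
def isProperLevel (Y : WFam V) (i c : ℕ) (f : Finset V → ℝ) : Prop :=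
  Y.isLevel i c f ∧ ∀ g : Finset V → ℝ, Y.isLevel (i + 1) c g → Y.inner c f g = 0

end WFam

/-- The coboundary operator on oriented cochains (represented by their values
on the increasing ordering of each face, with respect to a linear order on the
vertices): `(δ f)(σ) = Σ_{j} (-1)^j f(σ ∖ {j-th smallest element of σ})`. -/
def coboundary {V : Type*} [LinearOrder V] [Fintype V] (f : Finset V → ℝ) :
    Finset V → ℝ :=
  fun σ => ∑ v ∈ σ, (-1 : ℝ) ^ (σ.filter (fun u => u < v)).card * f (σ.erase v)

/-- A weighted pure `d`-dimensional simplicial complex: a downward closed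
family of faces, each contained in a face of cardinality `d+1`
(dimension `d`), together with a weight function `w : X → (0, 1]` summing to
`1` on the top faces and satisfying the averaging recurrence on lower faces. -/
structure WSC (V : Type*) [DecidableEq V] [Fintype V] (d : ℕ) extends WFam V where
  empty_mem : ∅ ∈ faces
  down_closed : ∀ ⦃σ⦄, σ ∈ faces → ∀ ⦃τ⦄, τ ⊆ σ → τ ∈ faces
  isPure : ∀ σ ∈ faces, ∃ σ' ∈ faces, σ ⊆ σ' ∧ σ'.card = d + 1
  w_pos : ∀ σ ∈ faces, 0 < w σ
  w_le_one : ∀ σ ∈ faces, w σ ≤ 1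
  w_sum_top : ∑ σ ∈ faces.filter (fun σ => σ.card = d + 1), w σ = 1
  w_down : ∀ τ ∈ faces, τ.card ≤ d →
    w τ = (((d + 1).choose τ.card : ℝ))⁻¹ *
      ∑ σ ∈ faces.filter (fun σ => σ.card = d + 1 ∧ τ ⊆ σ), w σ


variable {d : ℕ}

/-!
Both sides are sums over the `(k+1)`-faces `η` of `w η` times one local quantity, the sum of
`g σ * f τ` over pairs of `k`-faces with `σ ∪ τ = η`: on a single `k`-face `σ` the factor `w σ`
cancels against the link weight, `w σ * w_σ(τ ∖ σ) = w (σ ∪ τ) / (k + 2)`. On the right-hand side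
the pair `(σ, η)`, with `σ ∈ X(i)` and `η` in its link, contributes `w (σ ∪ η) / C(i + k + 3, i + 1)`,
and summing over `σ` the weights of the `(i + k + 2)`-faces above `η` gives back `w η`, by double
counting through the top faces.
-/

def coveringPairSum (c : ℕ) (f g : Finset V → ℝ) (η : Finset V) : ℝ :=
  ∑ p ∈ (η.powersetCard c ×ˢ η.powersetCard c).filter (fun p => p.1 ∪ p.2 = η),
    g p.1 * f p.2

namespace WFam

def IsDownClosed (Y : WFam V) : Prop :=
  ∀ ⦃σ⦄, σ ∈ Y.faces → ∀ ⦃τ⦄, τ ⊆ σ → τ ∈ Y.faces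

variable {Y : WFam V}

lemma mem_dimFaces {σ : Finset V} {c : ℕ} : σ ∈ Y.dimFaces c ↔ σ ∈ Y.faces ∧ σ.card = c :=
  mem_filter

lemma mem_link_faces {σ s : Finset V} :
    s ∈ (Y.link σ).faces ↔ Disjoint s σ ∧ s ∪ σ ∈ Y.faces := by
  simp [link]

lemma IsDownClosed.link (hY : Y.IsDownClosed) (σ : Finset V) :
    (Y.link σ).IsDownClosed := by
  intro s hs t hts
  rw [mem_link_faces] at hs ⊢
  exact ⟨hs.1.mono_left hts, hY hs.2 (union_subset_union hts subset_rfl)⟩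

lemma link_w_ne_zero (hw : ∀ σ ∈ Y.faces, Y.w σ ≠ 0) {σ : Finset V}
    (hσ : σ ∈ Y.faces) : ∀ s ∈ (Y.link σ).faces, (Y.link σ).w s ≠ 0 := by
  intro s hs
  have hchoose : ((s.card + σ.card).choose σ.card : ℝ) ≠ 0 := by
    exact_mod_cast (Nat.choose_pos (Nat.le_add_left _ _)).ne'
  exact div_ne_zero (hw _ (mem_link_faces.1 hs).2) (mul_ne_zero hchoose (hw σ hσ))

lemma w_mul_link_w {σ : Finset V} (hσ : Y.w σ ≠ 0) (s : Finset V) :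
    Y.w σ * (Y.link σ).w s = Y.w (s ∪ σ) / ((s.card + σ.card).choose σ.card : ℝ) := by
  simp only [link]
  field_simp

lemma sum_dimFaces_sum_link_dimFaces_comm (hY : Y.IsDownClosed) (a b : ℕ)
    (F : Finset V → Finset V → ℝ) :
    ∑ σ ∈ Y.dimFaces a, ∑ η ∈ (Y.link σ).dimFaces b, F σ η
      = ∑ η ∈ Y.dimFaces b, ∑ σ ∈ (Y.link η).dimFaces a, F σ η := by
  refine sum_comm' fun σ η => ?_
  simp only [mem_dimFaces, mem_link_faces, union_comm η σ, disjoint_comm (a := η)]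
  constructor
  · rintro ⟨⟨-, hσa⟩, ⟨hdisj, hun⟩, hηb⟩
    exact ⟨⟨⟨hdisj, hun⟩, hσa⟩, hY hun subset_union_right, hηb⟩
  · rintro ⟨⟨⟨hdisj, hun⟩, hσa⟩, -, hηb⟩
    exact ⟨⟨hY hun subset_union_left, hσa⟩, ⟨hdisj, hun⟩, hηb⟩

lemma w_mul_link_w_sdiff (hw : ∀ σ ∈ Y.faces, Y.w σ ≠ 0) {c : ℕ} {σ τ : Finset V}
    (hσ : σ ∈ Y.dimFaces c) (hστ : σ ∪ τ ∈ Y.dimFaces (c + 1)) :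
    Y.w σ * (Y.link σ).w (τ \ σ) = Y.w (σ ∪ τ) / ((c : ℝ) + 1) := by
  rw [mem_dimFaces] at hσ hστ
  rw [w_mul_link_w (hw σ hσ.1), card_sdiff_add_card, sdiff_union_self_eq_union,
    union_comm τ σ, hστ.2, hσ.2, Nat.choose_succ_self_right, Nat.cast_succ]

theorem inner_nonLazy_eq (hY : Y.IsDownClosed) (hw : ∀ σ ∈ Y.faces, Y.w σ ≠ 0) (c : ℕ)
    (f g : Finset V → ℝ) :
    Y.inner c (Y.nonLazy c f) g
      = ((c : ℝ) * (c + 1))⁻¹ * ∑ η ∈ Y.dimFaces (c + 1), Y.w η * coveringPairSum c f g η := by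
  set S := (Y.dimFaces c ×ˢ Y.dimFaces c).filter fun p => p.1 ∪ p.2 ∈ Y.dimFaces (c + 1)
  have hS : Y.inner c (Y.nonLazy c f) g
      = ((c : ℝ) * (c + 1))⁻¹ * ∑ p ∈ S, Y.w (p.1 ∪ p.2) * (g p.1 * f p.2) := by
    rw [sum_filter, sum_product, mul_sum]
    refine sum_congr rfl fun σ hσ => ?_
    simp only [nonLazy, sum_filter, mul_sum, sum_mul, mul_inv]
    refine sum_congr rfl fun τ _ => ?_
    split_ifs with hστ
    · linear_combination ((c : ℝ)⁻¹ * f τ * g σ) * w_mul_link_w_sdiff hw hσ hστ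
    · simp
  have hfiber : ∀ η ∈ Y.dimFaces (c + 1),
      S.filter (fun p => p.1 ∪ p.2 = η)
        = (η.powersetCard c ×ˢ η.powersetCard c).filter (fun p => p.1 ∪ p.2 = η) := by
    intro η hη
    ext ⟨σ, τ⟩
    simp only [S, mem_filter, mem_product, mem_powersetCard, mem_dimFaces] at hη ⊢
    constructor
    · rintro ⟨⟨⟨⟨-, hσc⟩, -, hτc⟩, -⟩, rfl⟩
      exact ⟨⟨⟨subset_union_left, hσc⟩, subset_union_right, hτc⟩, rfl⟩
    · rintro ⟨⟨⟨hση, hσc⟩, hτη, hτc⟩, rfl⟩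
      exact ⟨⟨⟨⟨hY hη.1 hση, hσc⟩, hY hη.1 hτη, hτc⟩, hη⟩, rfl⟩
  rw [hS, ← sum_fiberwise_of_maps_to (s := S) (g := fun p => p.1 ∪ p.2) (t := Y.dimFaces (c + 1))
    (fun p hp => (mem_filter.1 hp).2)]
  congr 1
  refine sum_congr rfl fun η hη => ?_
  rw [hfiber η hη, coveringPairSum, mul_sum]
  exact sum_congr rfl fun p hp => by rw [(mem_filter.1 hp).2]

end WFam

namespace WSC

variable (X : WSC V d)

lemma isDownClosed : X.IsDownClosed := X.down_closed

lemma w_eq_sum_top {τ : Finset V} (hτ : τ ∈ X.faces) (hτd : τ.card ≤ d + 1) :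
    X.w τ = ((d + 1).choose τ.card : ℝ)⁻¹ *
      ∑ σ ∈ X.faces.filter (fun σ => σ.card = d + 1 ∧ τ ⊆ σ), X.w σ := by
  rcases hτd.lt_or_eq with hlt | htop
  · exact X.w_down τ hτ (Nat.lt_succ_iff.1 hlt)
  · have hself : X.faces.filter (fun σ => σ.card = d + 1 ∧ τ ⊆ σ) = {τ} := by
      ext σ
      simp only [mem_filter, mem_singleton]
      constructor
      · rintro ⟨-, hσ, hτσ⟩
        exact (eq_of_subset_of_card_le hτσ (by omega)).symm
      · rintro rfl
        exact ⟨hτ, htop, subset_rfl⟩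
    rw [hself, sum_singleton, htop, Nat.choose_self, Nat.cast_one, inv_one, one_mul]

/-- Double counting the top faces above `η` through the `m`-faces between them. -/
lemma sum_w_superset {η : Finset V} (hη : η ∈ X.faces) {m : ℕ} (hηm : η.card ≤ m)
    (hm : m ≤ d + 1) :
    ∑ ρ ∈ X.faces.filter (fun ρ => ρ.card = m ∧ η ⊆ ρ), X.w ρ = m.choose η.card * X.w η := by
  set tops := X.faces.filter (fun σ => σ.card = d + 1 ∧ η ⊆ σ)
  have hcount : ∀ σ ∈ tops,
      ((σ.powersetCard m).filter (η ⊆ ·)).card = (d + 1 - η.card).choose (m - η.card) := by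
    intro σ hσ
    obtain ⟨-, hσd, hησ⟩ := mem_filter.1 hσ
    rw [card_filter_powersetCard_subset η σ m hησ hηm, hσd]
  have hchoose : ((d + 1).choose m : ℝ) * m.choose η.card
      = (d + 1).choose η.card * (d + 1 - η.card).choose (m - η.card) := by
    exact_mod_cast Nat.choose_mul hηm
  have hdm : ((d + 1).choose m : ℝ) ≠ 0 := by exact_mod_cast (Nat.choose_pos hm).ne'
  have hdη : ((d + 1).choose η.card : ℝ) ≠ 0 := by
    exact_mod_cast (Nat.choose_pos (hηm.trans hm)).ne'
  calc ∑ ρ ∈ X.faces.filter (fun ρ => ρ.card = m ∧ η ⊆ ρ), X.w ρ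
      = ((d + 1).choose m : ℝ)⁻¹ * ∑ ρ ∈ X.faces.filter (fun ρ => ρ.card = m ∧ η ⊆ ρ),
          ∑ σ ∈ X.faces.filter (fun σ => σ.card = d + 1 ∧ ρ ⊆ σ), X.w σ := by
        rw [mul_sum]
        refine sum_congr rfl fun ρ hρ => ?_
        obtain ⟨hρ, hρm, -⟩ := mem_filter.1 hρ
        rw [X.w_eq_sum_top hρ (hρm ▸ hm), hρm]
    _ = ((d + 1).choose m : ℝ)⁻¹ * ∑ σ ∈ tops, ∑ _ρ ∈ (σ.powersetCard m).filter (η ⊆ ·), X.w σ := by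
        congr 1
        refine sum_comm' fun ρ σ => ?_
        simp only [tops, mem_filter, mem_powersetCard]
        constructor
        · rintro ⟨⟨-, hρm, hηρ⟩, hσ, hσd, hρσ⟩
          exact ⟨⟨⟨hρσ, hρm⟩, hηρ⟩, hσ, hσd, hηρ.trans hρσ⟩
        · rintro ⟨⟨⟨hρσ, hρm⟩, hηρ⟩, hσ, hσd, -⟩
          exact ⟨⟨X.down_closed hσ hρσ, hρm, hηρ⟩, hσ, hσd, hρσ⟩
    _ = ((d + 1).choose m : ℝ)⁻¹ * ((d + 1 - η.card).choose (m - η.card) * ∑ σ ∈ tops, X.w σ) := by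
        congr 1
        rw [mul_sum]
        refine sum_congr rfl fun σ hσ => ?_
        rw [sum_const, hcount σ hσ, nsmul_eq_mul]
    _ = m.choose η.card * X.w η := by
        rw [X.w_eq_sum_top hη (hηm.trans hm)]
        field_simp
        linear_combination -(∑ σ ∈ tops, X.w σ) * hchoose

lemma sum_link_dimFaces_w_union {η : Finset V} (hη : η ∈ X.faces) {a : ℕ}
    (h : η.card + a ≤ d + 1) :
    ∑ σ ∈ (X.link η).dimFaces a, X.w (σ ∪ η) = (η.card + a).choose η.card * X.w η := by
  rw [← X.sum_w_superset hη (Nat.le_add_right _ _) h]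
  refine sum_nbij' (· ∪ η) (· \ η) ?_ ?_ ?_ ?_ fun _ _ => rfl
  · intro σ hσ
    simp only [mem_filter, WFam.mem_dimFaces, WFam.mem_link_faces] at hσ ⊢
    obtain ⟨⟨hdisj, hun⟩, hσa⟩ := hσ
    exact ⟨hun, by rw [card_union_of_disjoint hdisj, hσa, add_comm], subset_union_right⟩
  · intro ρ hρ
    simp only [mem_filter, WFam.mem_dimFaces, WFam.mem_link_faces] at hρ ⊢
    obtain ⟨hρ, hρc, hηρ⟩ := hρ
    rw [sdiff_union_of_subset hηρ, card_sdiff_of_subset hηρ, hρc]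
    exact ⟨⟨sdiff_disjoint, hρ⟩, by omega⟩
  · intro σ hσ
    simp only [WFam.mem_dimFaces, WFam.mem_link_faces] at hσ
    exact union_sdiff_cancel_right hσ.1.1
  · intro ρ hρ
    simp only [mem_filter] at hρ
    exact sdiff_union_of_subset hρ.2.2

end WSC

/-- The cardinalities `a = i + 1` and `c = k + 1` stand for the dimensions `i` and `k`. -/
theorem nonLazy_respects_restriction_general (X : WSC V d) (a c : ℕ) (h : a + c ≤ d)
    (f g : Finset V → ℝ) :
    X.toWFam.inner c (X.toWFam.nonLazy c f) g =
      ∑ σ ∈ X.toWFam.dimFaces a,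
        X.toWFam.w σ * (X.toWFam.link σ).inner c ((X.toWFam.link σ).nonLazy c f) g := by
  have hw : ∀ σ ∈ X.faces, X.w σ ≠ 0 := fun σ hσ => (X.w_pos σ hσ).ne'
  have hlink : ∀ σ ∈ X.toWFam.dimFaces a,
      X.w σ * (X.link σ).inner c ((X.link σ).nonLazy c f) g
        = ((c : ℝ) * (c + 1))⁻¹ * ∑ η ∈ (X.link σ).dimFaces (c + 1),
            X.w (σ ∪ η) / ((c + 1 + a).choose a : ℝ) * coveringPairSum c f g η := by
    intro σ hσ
    obtain ⟨hσ, hσa⟩ := WFam.mem_dimFaces.1 hσ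
    rw [(X.link σ).inner_nonLazy_eq (X.isDownClosed.link σ) (WFam.link_w_ne_zero hw hσ),
      mul_left_comm, mul_sum]
    refine congrArg _ (sum_congr rfl fun η hη => ?_)
    rw [← mul_assoc, WFam.w_mul_link_w (hw σ hσ), (WFam.mem_dimFaces.1 hη).2, hσa,
      union_comm]
  rw [sum_congr rfl hlink, ← mul_sum, WFam.sum_dimFaces_sum_link_dimFaces_comm X.isDownClosed,
    X.inner_nonLazy_eq X.isDownClosed hw]
  refine congrArg _ (sum_congr rfl fun η hη => ?_)
  obtain ⟨hη, hηc⟩ := WFam.mem_dimFaces.1 hη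
  have hchoose : ((c + 1 + a).choose a : ℝ) ≠ 0 := by
    exact_mod_cast (Nat.choose_pos (Nat.le_add_left _ _)).ne'
  rw [← sum_mul, ← sum_div, X.sum_link_dimFaces_w_union hη (by omega), hηc,
    Nat.choose_symm_add]
  field_simp

/-- For `i, k ≥ 0` with `i + k + 2 ≤ d` (here `a = i + 1`,
`c = k + 1`, so `a + c ≤ d`) and all `f, g ∈ C^k(X;ℝ)`:
`⟨M_k^+ f, g⟩ = Σ_{σ ∈ X(i)} w σ ⟨M_k^+(f|_σ), g|_σ⟩_{X_σ}`, where `f|_σ` is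
the restriction of `f` to the link faces and `M_k^+` on the right-hand side is
the non-lazy up-down walk operator of the link `X_σ` (with the link weights
`w_σ`); i.e. restriction respects the non-lazy up-down random walk. -/
theorem nonLazy_respects_restriction (X : WSC V d) (a c : ℕ) (ha : 1 ≤ a)
    (hc1 : 1 ≤ c) (h : a + c ≤ d) (f g : Finset V → ℝ) :
    X.toWFam.inner c (X.toWFam.nonLazy c f) g =
      ∑ σ ∈ X.toWFam.dimFaces a,
        X.toWFam.w σ * (X.toWFam.link σ).inner c ((X.toWFam.link σ).nonLazy c f) g :=
  nonLazy_respects_restriction_general X a c h f g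

end

end HDRW
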